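/- arXiv:1203.5077 — 2 statements merged into one kernel-verified Lean document; each statement's English description precedes it below -/
import Mathlib

section
/- Let (A, Δ_0 = d, Δ_1, Δ_2, …) be a multicomplex. There exists a family of linear maps R_n : A → A of degree 2n (n ≥ 1) satisfying the gauge Hodge condition (i.e., with E_0 := id_A and E_n := Σ_{k≥1} (1/k!) Σ_{i_1+⋯+i_k = n, i_j ≥ 1} R_{i_1} ⋯ R_{i_k}, one has E_n d = Σ_{l=0}^{n} Δ_l E_{n−l} for all n ≥ 0) if and only if there exists an ∞-isotopy from the trivial multicomplex (A, d, 0, 0, …) to (A, d, Δ_1, Δ_2, …), i.e. a family of linear maps f_n : A → A of degree 2n with f_0 = id_A and f_n d = Σ_{k+l=n} Δ_k f_l for all n ≥ 0. -/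
open Module LinearMap Finset

variable (𝕜 : Type) [Field 𝕜] [CharZero 𝕜]

/-- A linear map `f` between graded vector spaces has degree `m` with respect to the
gradings `𝒜` and `ℬ` : it maps the piece of degree `j` into the piece of degree `j + m`. -/
def HasDeg {A B : Type} [AddCommGroup A] [Module 𝕜 A] [AddCommGroup B] [Module 𝕜 B]
    (𝒜 : ℤ → Submodule 𝕜 A) (ℬ : ℤ → Submodule 𝕜 B) (f : A →ₗ[𝕜] B) (m : ℤ) : Prop :=
  ∀ j : ℤ, (𝒜 j).map f ≤ ℬ (j + m)

/-- A multicomplex structure on a graded vector space `(A, 𝒜)` : a family of operators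
`Δ n` of degree `2n - 1` satisfying `∑_{i=0}^{n} Δ_i Δ_{n-i} = 0` for all `n ≥ 0`. -/
def IsMulticomplex {A : Type} [AddCommGroup A] [Module 𝕜 A]
    (𝒜 : ℤ → Submodule 𝕜 A) (Δ : ℕ → Module.End 𝕜 A) : Prop :=
  (∀ n : ℕ, HasDeg 𝕜 𝒜 𝒜 (Δ n) (2 * (n : ℤ) - 1)) ∧
  (∀ n : ℕ, ∑ i ∈ Finset.range (n + 1), Δ i ∘ₗ Δ (n - i) = 0)

/-- A chain map `i : (H, dH) → (A, dA)` is a quasi-isomorphism: the induced map on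
homology is injective and surjective. -/
def IsQuasiIso {H A : Type} [AddCommGroup H] [Module 𝕜 H] [AddCommGroup A] [Module 𝕜 A]
    (dH : Module.End 𝕜 H) (dA : Module.End 𝕜 A) (i : H →ₗ[𝕜] A) : Prop :=
  (∀ x ∈ LinearMap.ker dH, i x ∈ LinearMap.range dA → x ∈ LinearMap.range dH) ∧
  (∀ y ∈ LinearMap.ker dA, ∃ x ∈ LinearMap.ker dH, y - i x ∈ LinearMap.range dA)

/-- A homotopy retract of the chain complex `(A, dA)` onto the chain complex `(H, dH)`:
chain maps `p, i` of degree `0`, with `i` a quasi-isomorphism, and a degree `1` homotopy `h`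
with `i p - id = dA h + h dA`. -/
def IsHomotopyRetract {A H : Type} [AddCommGroup A] [Module 𝕜 A] [AddCommGroup H] [Module 𝕜 H]
    (𝒜 : ℤ → Submodule 𝕜 A) (ℋ : ℤ → Submodule 𝕜 H)
    (dA : Module.End 𝕜 A) (dH : Module.End 𝕜 H)
    (p : A →ₗ[𝕜] H) (i : H →ₗ[𝕜] A) (h : Module.End 𝕜 A) : Prop :=
  HasDeg 𝕜 𝒜 ℋ p 0 ∧ HasDeg 𝕜 ℋ 𝒜 i 0 ∧ HasDeg 𝕜 𝒜 𝒜 h 1 ∧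
  p ∘ₗ dA = dH ∘ₗ p ∧ i ∘ₗ dH = dA ∘ₗ i ∧
  IsQuasiIso 𝕜 dH dA i ∧
  i ∘ₗ p - LinearMap.id = dA ∘ₗ h + h ∘ₗ dA

/-- The word `Δ_{i₁} h Δ_{i₂} h ⋯ h Δ_{i_k}` associated to a list `[i₁, …, i_k]`. -/
def mcWord {A : Type} [AddCommGroup A] [Module 𝕜 A]
    (Δ : ℕ → Module.End 𝕜 A) (h : Module.End 𝕜 A) : List ℕ → Module.End 𝕜 A
  | [] => 1
  | [n] => Δ n
  | n :: m :: rest => Δ n * h * mcWord Δ h (m :: rest)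

/-- The transferred operators `Δ'_0 := d_H` and, for `n ≥ 1`,
`Δ'_n := ∑_{i₁+⋯+i_k = n, i_j ≥ 1} p Δ_{i₁} h Δ_{i₂} h ⋯ h Δ_{i_k} i`. -/
noncomputable def transferredDelta {A H : Type} [AddCommGroup A] [Module 𝕜 A]
    [AddCommGroup H] [Module 𝕜 H]
    (Δ : ℕ → Module.End 𝕜 A) (h : Module.End 𝕜 A)
    (p : A →ₗ[𝕜] H) (i : H →ₗ[𝕜] A) (dH : Module.End 𝕜 H) : ℕ → Module.End 𝕜 H
  | 0 => dH
  | n + 1 => ∑ c : Composition (n + 1), p ∘ₗ mcWord 𝕜 Δ h c.blocks ∘ₗ i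

/-- An `∞`-morphism of multicomplexes `(A, Δ) ⇝ (B, Δ')` : a family of maps `f n` of
degree `2n` with `∑_{k+l=n} f_k Δ_l = ∑_{k+l=n} Δ'_k f_l` for all `n ≥ 0`. -/
def IsInftyMorphism {A B : Type} [AddCommGroup A] [Module 𝕜 A] [AddCommGroup B] [Module 𝕜 B]
    (𝒜 : ℤ → Submodule 𝕜 A) (ℬ : ℤ → Submodule 𝕜 B)
    (Δ : ℕ → Module.End 𝕜 A) (Δ' : ℕ → Module.End 𝕜 B)
    (f : ℕ → (A →ₗ[𝕜] B)) : Prop :=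
  (∀ n : ℕ, HasDeg 𝕜 𝒜 ℬ (f n) (2 * (n : ℤ))) ∧
  (∀ n : ℕ, ∑ k ∈ Finset.range (n + 1), f k ∘ₗ Δ (n - k) =
            ∑ k ∈ Finset.range (n + 1), Δ' k ∘ₗ f (n - k))

/-- The coefficients `E_n` of `e^{R(z)}` for `R(z) = ∑_{n ≥ 1} R_n zⁿ` :
`E_0 = id` and `E_n = ∑_{k ≥ 1} (1/k!) ∑_{i₁+⋯+i_k=n, i_j ≥ 1} R_{i₁} ⋯ R_{i_k}`. -/
noncomputable def expCoeff {A : Type} [AddCommGroup A] [Module 𝕜 A]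
    (R : ℕ → Module.End 𝕜 A) : ℕ → Module.End 𝕜 A
  | 0 => 1
  | n + 1 => ∑ c : Composition (n + 1), ((Nat.factorial c.length : 𝕜)⁻¹) • (c.blocks.map R).prod

section Aux
variable {𝕜} {A B : Type} [AddCommGroup A] [Module 𝕜 A] [AddCommGroup B] [Module 𝕜 B]
  {𝒜 : ℤ → Submodule 𝕜 A} {ℬ : ℤ → Submodule 𝕜 B}

lemma hasDeg_of {f : A →ₗ[𝕜] B} {m : ℤ} (h : ∀ j x, x ∈ 𝒜 j → f x ∈ ℬ (j + m)) :
    HasDeg 𝕜 𝒜 ℬ f m := fun j => by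
  rintro _ ⟨x, hx, rfl⟩; exact h j x hx

lemma hasDeg_apply {f : A →ₗ[𝕜] B} {m : ℤ} (h : HasDeg 𝕜 𝒜 ℬ f m) {j x} (hx : x ∈ 𝒜 j) :
    f x ∈ ℬ (j + m) := h j (Submodule.mem_map_of_mem hx)

lemma hasDeg_congr {f : A →ₗ[𝕜] B} {m m' : ℤ} (h : HasDeg 𝕜 𝒜 ℬ f m) (e : m = m') :
    HasDeg 𝕜 𝒜 ℬ f m' := e ▸ h

lemma hasDeg_zero (m : ℤ) : HasDeg 𝕜 𝒜 ℬ 0 m :=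
  hasDeg_of fun _ _ _ => by simp

lemma hasDeg_one : HasDeg 𝕜 𝒜 𝒜 (1 : Module.End 𝕜 A) 0 :=
  hasDeg_of fun j x hx => by simpa using hx

lemma hasDeg_sub {f g : A →ₗ[𝕜] B} {m : ℤ} (hf : HasDeg 𝕜 𝒜 ℬ f m) (hg : HasDeg 𝕜 𝒜 ℬ g m) :
    HasDeg 𝕜 𝒜 ℬ (f - g) m :=
  hasDeg_of fun j x hx => by
    rw [LinearMap.sub_apply]; exact Submodule.sub_mem _ (hasDeg_apply hf hx) (hasDeg_apply hg hx)

lemma hasDeg_smul {f : A →ₗ[𝕜] B} {m : ℤ} (c : 𝕜) (hf : HasDeg 𝕜 𝒜 ℬ f m) :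
    HasDeg 𝕜 𝒜 ℬ (c • f) m :=
  hasDeg_of fun j x hx => by
    rw [LinearMap.smul_apply]; exact Submodule.smul_mem _ _ (hasDeg_apply hf hx)

lemma hasDeg_sum {ι : Type*} (s : Finset ι) {f : ι → (A →ₗ[𝕜] B)} {m : ℤ}
    (h : ∀ i ∈ s, HasDeg 𝕜 𝒜 ℬ (f i) m) : HasDeg 𝕜 𝒜 ℬ (∑ i ∈ s, f i) m :=
  hasDeg_of fun j x hx => by
    rw [LinearMap.sum_apply]; exact Submodule.sum_mem _ fun i hi => hasDeg_apply (h i hi) hx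

lemma hasDeg_mul {f g : Module.End 𝕜 A} {m l : ℤ} (hf : HasDeg 𝕜 𝒜 𝒜 f m)
    (hg : HasDeg 𝕜 𝒜 𝒜 g l) : HasDeg 𝕜 𝒜 𝒜 (f * g) (m + l) :=
  hasDeg_of fun j x hx => by
    rw [Module.End.mul_apply]
    have := hasDeg_apply hf (hasDeg_apply hg hx)
    rwa [show j + l + m = j + (m + l) by ring] at this

lemma hasDeg_listProd {R : ℕ → Module.End 𝕜 A} (l : List ℕ)
    (h : ∀ i ∈ l, HasDeg 𝕜 𝒜 𝒜 (R i) (2 * (i : ℤ))) :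
    HasDeg 𝕜 𝒜 𝒜 ((l.map R).prod) (2 * (l.sum : ℤ)) := by
  induction l with
  | nil => simpa using hasDeg_one
  | cons a l ih =>
      have := hasDeg_mul (h a List.mem_cons_self)
        (ih fun i hi => h i (List.mem_cons_of_mem _ hi))
      rw [List.map_cons, List.prod_cons]
      refine hasDeg_congr this ?_
      rw [List.sum_cons]; push_cast; ring
end Aux

section Inv
variable {𝕜} {A : Type} [AddCommGroup A] [Module 𝕜 A] {𝒜 : ℤ → Submodule 𝕜 A}

/-- Partial logarithm: `Raux f N` agrees with the final `R` on indices `≤ N`. -/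
noncomputable def Raux (f : ℕ → Module.End 𝕜 A) : ℕ → ℕ → Module.End 𝕜 A
  | 0 => fun _ => 0
  | N + 1 => fun n =>
      if n = N + 1 then
        f (N + 1) - ∑ c : Composition (N + 1),
          if c.length = 1 then 0
          else ((Nat.factorial c.length : 𝕜)⁻¹) • (c.blocks.map (Raux f N)).prod
      else Raux f N n

noncomputable def Rof (f : ℕ → Module.End 𝕜 A) (n : ℕ) : Module.End 𝕜 A := Raux f n n

lemma Raux_eq_Rof (f : ℕ → Module.End 𝕜 A) : ∀ N n, n ≤ N → Raux f N n = Rof f n := by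
  intro N
  induction N with
  | zero => intro n hn; interval_cases n; rfl
  | succ N ih =>
      intro n hn
      rcases eq_or_lt_of_le hn with h | h
      · subst h; rfl
      · have hn' : n ≤ N := by omega
        have : Raux f (N + 1) n = Raux f N n := by
          simp only [Raux, if_neg (by omega : ¬ n = N + 1)]
        rw [this, ih n hn']

lemma blocks_le_of_length_ne_one {n : ℕ} (c : Composition (n + 1)) (hc : c.length ≠ 1) :
    ∀ i ∈ c.blocks, i ≤ n := by
  intro i hi
  have hne : c ≠ Composition.single (n + 1) n.succ_pos := by
    intro h; exact hc (by rw [h, Composition.single_length])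
  rw [← Composition.ofFn_blocksFun, List.mem_ofFn] at hi
  obtain ⟨j, rfl⟩ := hi
  have := (Composition.ne_single_iff n.succ_pos).1 hne j
  omega

lemma Rof_succ (f : ℕ → Module.End 𝕜 A) (n : ℕ) :
    Rof f (n + 1) = f (n + 1) - ∑ c : Composition (n + 1),
      if c.length = 1 then 0
      else ((Nat.factorial c.length : 𝕜)⁻¹) • (c.blocks.map (Rof f)).prod := by
  have hs : (∑ c : Composition (n + 1),
      if c.length = 1 then (0 : Module.End 𝕜 A)
      else ((Nat.factorial c.length : 𝕜)⁻¹) • (c.blocks.map (Raux f n)).prod)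
      = ∑ c : Composition (n + 1),
        if c.length = 1 then (0 : Module.End 𝕜 A)
        else ((Nat.factorial c.length : 𝕜)⁻¹) • (c.blocks.map (Rof f)).prod := by
    refine Finset.sum_congr rfl fun c _ => ?_
    by_cases hc : c.length = 1
    · rw [if_pos hc, if_pos hc]
    · rw [if_neg hc, if_neg hc, List.map_congr_left
        (fun i hi => Raux_eq_Rof f n i (blocks_le_of_length_ne_one c hc i hi))]
  show Raux f (n+1) (n+1) = _
  simp only [Raux, eq_self_iff_true, if_true]
  rw [hs]

lemma expCoeff_Rof (f : ℕ → Module.End 𝕜 A) (n : ℕ) :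
    expCoeff 𝕜 (Rof f) (n + 1) = f (n + 1) := by
  have key : ∀ c : Composition (n + 1),
      ((Nat.factorial c.length : 𝕜)⁻¹) • (c.blocks.map (Rof f)).prod =
      (if c.length = 1 then ((Nat.factorial c.length : 𝕜)⁻¹) • (c.blocks.map (Rof f)).prod else 0)
      + (if c.length = 1 then 0
         else ((Nat.factorial c.length : 𝕜)⁻¹) • (c.blocks.map (Rof f)).prod) := by
    intro c; by_cases hc : c.length = 1 <;> simp [hc]
  rw [show expCoeff 𝕜 (Rof f) (n+1) = ∑ c : Composition (n + 1),
      ((Nat.factorial c.length : 𝕜)⁻¹) • (c.blocks.map (Rof f)).prod from rfl]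
  rw [Finset.sum_congr rfl fun c _ => key c, Finset.sum_add_distrib]
  classical
  have h1 : (∑ c : Composition (n + 1),
      if c.length = 1 then ((Nat.factorial c.length : 𝕜)⁻¹) • (c.blocks.map (Rof f)).prod else 0)
      = Rof f (n + 1) := by
    have heq : ∀ c : Composition (n + 1),
        (if c.length = 1 then ((Nat.factorial c.length : 𝕜)⁻¹) • (c.blocks.map (Rof f)).prod else 0)
        = (if c = Composition.single (n+1) n.succ_pos
            then ((Nat.factorial c.length : 𝕜)⁻¹) • (c.blocks.map (Rof f)).prod else 0) := fun c =>
      if_congr (Composition.eq_single_iff_length n.succ_pos).symm rfl rfl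
    rw [Finset.sum_congr rfl fun c _ => heq c,
      Finset.sum_ite_eq' Finset.univ (Composition.single (n+1) n.succ_pos)]
    simp [Composition.single_length, Composition.single_blocks]
  rw [h1, Rof_succ]
  abel

lemma Rof_deg {f : ℕ → Module.End 𝕜 A} (hf : ∀ n : ℕ, HasDeg 𝕜 𝒜 𝒜 (f n) (2 * (n : ℤ))) :
    ∀ n : ℕ, HasDeg 𝕜 𝒜 𝒜 (Rof f n) (2 * (n : ℤ)) := by
  intro n
  induction n using Nat.strong_induction_on with
  | _ n ih =>
    match n with
    | 0 => exact hasDeg_zero _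
    | n + 1 =>
      rw [Rof_succ]
      refine hasDeg_sub (hf _) (hasDeg_sum _ fun c _ => ?_)
      by_cases hc : c.length = 1
      · rw [if_pos hc]; exact hasDeg_zero _
      · rw [if_neg hc]
        refine hasDeg_smul _ ?_
        have := hasDeg_listProd (𝒜 := 𝒜) c.blocks (fun i hi => by
          have hle := blocks_le_of_length_ne_one c hc i hi
          have : Rof f i = Raux f n i := (Raux_eq_Rof f n i hle).symm
          exact ih i (by omega))
        rwa [c.blocks_sum] at this
end Inv

lemma expCoeff_deg {A : Type} [AddCommGroup A] [Module 𝕜 A] {𝒜 : ℤ → Submodule 𝕜 A}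
    {R : ℕ → Module.End 𝕜 A} (hR : ∀ n : ℕ, 1 ≤ n → HasDeg 𝕜 𝒜 𝒜 (R n) (2 * (n : ℤ)))
    (n : ℕ) : HasDeg 𝕜 𝒜 𝒜 (expCoeff 𝕜 R n) (2 * (n : ℤ)) := by
  match n with
  | 0 =>
    show HasDeg 𝕜 𝒜 𝒜 (1 : Module.End 𝕜 A) (2 * ((0:ℕ) : ℤ))
    rw [show (2 * ((0:ℕ) : ℤ)) = 0 by norm_num]
    exact hasDeg_one
  | n + 1 =>
    show HasDeg 𝕜 𝒜 𝒜 (∑ c : Composition (n + 1),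
      ((Nat.factorial c.length : 𝕜)⁻¹) • (c.blocks.map R).prod) _
    refine hasDeg_sum _ fun c _ => hasDeg_smul _ ?_
    have := hasDeg_listProd (𝒜 := 𝒜) c.blocks
      (fun i hi => hR i (c.one_le_blocks hi))
    rwa [c.blocks_sum] at this


/-- a multicomplex satisfies the gauge Hodge condition if and only if there is
an `∞`-isotopy from the trivial multicomplex `(A, d, 0, 0, …)` to `(A, d, Δ_1, Δ_2, …)`,
i.e. a family `f_n` of degree `2n` with `f_0 = id` and `f_n d = ∑_{k+l=n} Δ_k f_l`. -/
theorem gaugeHodge_iff_inftyIsotopy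
    {A : Type} [AddCommGroup A] [Module 𝕜 A]
    (𝒜 : ℤ → Submodule 𝕜 A) (h𝒜 : DirectSum.IsInternal 𝒜)
    (Δ : ℕ → Module.End 𝕜 A) (hΔ : IsMulticomplex 𝕜 𝒜 Δ) :
    (∃ R : ℕ → Module.End 𝕜 A,
      (∀ n : ℕ, 1 ≤ n → HasDeg 𝕜 𝒜 𝒜 (R n) (2 * (n : ℤ))) ∧
      (∀ n : ℕ, expCoeff 𝕜 R n ∘ₗ Δ 0 =
        ∑ l ∈ Finset.range (n + 1), Δ l ∘ₗ expCoeff 𝕜 R (n - l)))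
    ↔
    (∃ f : ℕ → Module.End 𝕜 A,
      (∀ n : ℕ, HasDeg 𝕜 𝒜 𝒜 (f n) (2 * (n : ℤ))) ∧
      f 0 = LinearMap.id ∧
      (∀ n : ℕ, f n ∘ₗ Δ 0 =
        ∑ k ∈ Finset.range (n + 1), Δ k ∘ₗ f (n - k))) := by
  constructor
  · rintro ⟨R, hRdeg, hReq⟩
    refine ⟨expCoeff 𝕜 R, fun n => expCoeff_deg 𝕜 hRdeg n, ?_, hReq⟩
    rfl
  · rintro ⟨f, hfdeg, hf0, hfeq⟩
    refine ⟨Rof f, fun n _ => Rof_deg hfdeg n, fun n => ?_⟩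
    have hexp : expCoeff 𝕜 (Rof f) = f := by
      funext m
      match m with
      | 0 => rw [hf0]; rfl
      | m + 1 => exact expCoeff_Rof f m
    rw [hexp]
    exact hfeq n
end

section
/- Let (A, Δ_0 = d, Δ_1, Δ_2, …) be a multicomplex satisfying the gauge Hodge condition: there exists a family of linear maps R_n : A → A of degree 2n (n ≥ 1) such that, with E_0 := id_A and E_n := Σ_{k≥1} (1/k!) Σ_{i_1+⋯+i_k = n, i_j ≥ 1} R_{i_1} ⋯ R_{i_k}, one has E_n d = Σ_{l=0}^{n} Δ_l E_{n−l} for all n ≥ 0. Then EVERY deformation retract (p, i, h) of (A, d) onto the homology (H(A, d), 0) is a Hodge-to-de Rham degeneration data: the transferred operators Δ′_n := Σ_{k≥1} Σ_{i_1+⋯+i_k = n, i_j ≥ 1} p Δ_{i_1} h Δ_{i_2} h ⋯ h Δ_{i_k} i vanish for all n ≥ 1. -/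
open Module LinearMap Finset

variable (𝕜 : Type) [Field 𝕜] [CharZero 𝕜]

set_option linter.unusedSectionVars false

def compCons (n j : ℕ) (hj : j ≤ n) (c : Composition (n - j)) : Composition (n + 1) where
  blocks := (j+1) :: c.blocks
  blocks_pos := by
    intro k hk
    rcases List.mem_cons.mp hk with hk | hk
    · omega
    · exact c.blocks_pos hk
  blocks_sum := by
    have := c.blocks_sum
    simp only [List.sum_cons, this]
    omega

lemma comp_sum_split {M : Type*} [AddCommMonoid M] (G : List ℕ → M) (n : ℕ) :
    ∑ c : Composition (n+1), G c.blocks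
      = ∑ j ∈ Finset.range (n+1), ∑ c : Composition (n - j), G ((j+1) :: c.blocks) := by
  rw [Finset.sum_sigma' (Finset.range (n+1)) (fun j => (Finset.univ : Finset (Composition (n - j))))]
  refine (Finset.sum_bij (fun (x : Σ j : ℕ, Composition (n - j)) hx =>
      compCons n x.1 (by have := (Finset.mem_sigma.mp hx).1; simp at this; omega) x.2)
      (fun a ha => Finset.mem_univ _) ?_ ?_ ?_).symm
  · intro a₁ ha₁ a₂ ha₂ hEq
    have hb := congrArg Composition.blocks hEq
    simp only [compCons] at hb
    have h1 : a₁.1 = a₂.1 := by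
      have := List.head_eq_of_cons_eq hb; omega
    obtain ⟨j₁, c₁⟩ := a₁
    obtain ⟨j₂, c₂⟩ := a₂
    simp only at h1
    subst h1
    have h2 : c₁.blocks = c₂.blocks := List.tail_eq_of_cons_eq hb
    simp [Composition.ext_iff, h2]
  · intro c _
    have hne : c.blocks ≠ [] := by
      intro hnil
      have := c.blocks_sum
      rw [hnil] at this
      simp at this
    obtain ⟨a, l, hal⟩ := List.exists_cons_of_ne_nil hne
    have hapos : 0 < a := c.blocks_pos (by rw [hal]; exact List.mem_cons_self)
    have hsum := c.blocks_sum
    rw [hal] at hsum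
    simp only [List.sum_cons] at hsum
    have hjn : a - 1 ≤ n := by omega
    have hlsum : l.sum = n - (a - 1) := by omega
    refine ⟨⟨a - 1, ⟨l, fun {k} hk => c.blocks_pos (by rw [hal]; exact List.mem_cons_of_mem _ hk), hlsum⟩⟩, ?_, ?_⟩
    · simp [Finset.mem_sigma]; omega
    · apply Composition.ext
      simp only [compCons, hal]
      congr 1
      omega
  · intro a ha; rfl

instance : Unique (Composition 0) where
  default := ⟨[], by simp, rfl⟩
  uniq := by
    intro c
    apply Composition.ext
    cases hb : c.blocks with
    | nil => rfl
    | cons a l =>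
      have hs := c.blocks_sum
      rw [hb] at hs
      have : 0 < a := c.blocks_pos (by rw [hb]; exact List.mem_cons_self)
      simp only [List.sum_cons] at hs
      omega

variable {A : Type} [AddCommGroup A] [Module 𝕜 A]

lemma mcWord_cons (Δ : ℕ → Module.End 𝕜 A) (h : Module.End 𝕜 A) (a : ℕ) {l : List ℕ}
    (hl : l ≠ []) : mcWord 𝕜 Δ h (a :: l) = Δ a * h * mcWord 𝕜 Δ h l := by
  cases l with
  | nil => exact absurd rfl hl
  | cons b r => rfl

noncomputable def wSum (Δ : ℕ → Module.End 𝕜 A) (h : Module.End 𝕜 A) (n : ℕ) :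
    Module.End 𝕜 A :=
  ∑ c : Composition n, mcWord 𝕜 Δ h c.blocks

lemma wSum_succ (Δ : ℕ → Module.End 𝕜 A) (h : Module.End 𝕜 A) (n : ℕ) :
    wSum 𝕜 Δ h (n+1)
      = (∑ j ∈ Finset.range n, Δ (j+1) * h * wSum 𝕜 Δ h (n - j)) + Δ (n+1) := by
  rw [wSum, comp_sum_split, Finset.sum_range_succ]
  congr 1
  · apply Finset.sum_congr rfl
    intro j hj
    have hj' : j < n := Finset.mem_range.mp hj
    rw [wSum, Finset.mul_sum]
    apply Finset.sum_congr rfl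
    intro c _
    rw [mcWord_cons]
    intro hnil
    have := c.blocks_sum
    rw [hnil] at this
    simp at this
    omega
  · rw [Nat.sub_self]
    rw [Fintype.sum_unique]
    show mcWord 𝕜 Δ h [n+1] = Δ (n+1)
    rfl

section core

variable {A : Type} [AddCommGroup A] [Module 𝕜 A]
variable (Δ : ℕ → Module.End 𝕜 A) (h π : Module.End 𝕜 A) (E : ℕ → Module.End 𝕜 A)
variable (w : ℕ → Module.End 𝕜 A)

/-- abstract core: given the recursion for `w`, produce `J` with `d J = π w_n π`
assuming the smaller transferred operators vanish. -/
lemma key_coeff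
    (hw : ∀ n : ℕ, w (n+1) = (∑ j ∈ Finset.range n, Δ (j+1) * h * w (n - j)) + Δ (n+1))
    (hΦΦ : ∀ n, ∑ k ∈ Finset.range (n+1), Δ k ∘ₗ Δ (n-k) = 0)
    (hE0 : E 0 = 1)
    (hgauge : ∀ n, E n ∘ₗ Δ 0 = ∑ l ∈ Finset.range (n+1), Δ l ∘ₗ E (n-l))
    (hπ : π = 1 + Δ 0 * h + h * Δ 0)
    (hdπ : Δ 0 * π = 0) (hπd : π * Δ 0 = 0) (hππ : π * π = π) :
    ∀ n : ℕ, 1 ≤ n → (∀ m, 1 ≤ m → m < n → π * w m * π = 0) →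
      ∃ J : Module.End 𝕜 A, Δ 0 * J = π * w n * π := by
  classical
  -- series
  set δS : PowerSeries (Module.End 𝕜 A) := PowerSeries.mk (fun k => if k = 0 then 0 else Δ k) with hδS
  set XS : PowerSeries (Module.End 𝕜 A) := PowerSeries.mk (fun k => if k = 0 then 1 else h * w k) with hXS
  set ΦS : PowerSeries (Module.End 𝕜 A) := PowerSeries.mk Δ with hΦS
  set ES : PowerSeries (Module.End 𝕜 A) := PowerSeries.mk E with hES
  set Ds : PowerSeries (Module.End 𝕜 A) := PowerSeries.C (Δ 0) with hDs
  set Hs : PowerSeries (Module.End 𝕜 A) := PowerSeries.C h with hHs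
  set Ps : PowerSeries (Module.End 𝕜 A) := PowerSeries.C π with hPs
  -- coefficient of δS * XS
  have u_coeff : ∀ m, (PowerSeries.coeff m) (δS * XS) = if m = 0 then 0 else w m := by
    intro m
    rw [PowerSeries.coeff_mul, Finset.Nat.sum_antidiagonal_eq_sum_range_succ_mk]
    cases m with
    | zero => simp [hδS, hXS]
    | succ n =>
      rw [if_neg (Nat.succ_ne_zero n), Finset.sum_range_succ']
      have e0 : (PowerSeries.coeff 0) δS * (PowerSeries.coeff (n+1-0)) XS = 0 := by
        simp [hδS]
      rw [e0, add_zero, Finset.sum_range_succ]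
      have elast : (PowerSeries.coeff (n+1)) δS * (PowerSeries.coeff (n+1-(n+1))) XS = Δ (n+1) := by
        simp [hδS, hXS]
      have hrest : ∀ j ∈ Finset.range n,
          (PowerSeries.coeff (j+1)) δS * (PowerSeries.coeff (n+1-(j+1))) XS
            = Δ (j+1) * h * w (n-j) := by
        intro j hj
        have hj' : j < n := Finset.mem_range.mp hj
        simp only [hδS, hXS, PowerSeries.coeff_mk, Nat.succ_ne_zero, if_false]
        have h1 : n + 1 - (j+1) = n - j := by omega
        have h2 : n - j ≠ 0 := by omega
        rw [h1, if_neg h2, mul_assoc]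
      rw [elast, Finset.sum_congr rfl hrest, hw n]
  -- X recursion
  have hXrec : XS = 1 + Hs * (δS * XS) := by
    refine PowerSeries.ext fun m => ?_
    rw [map_add, hHs, PowerSeries.coeff_C_mul, u_coeff, PowerSeries.coeff_one]
    cases m with
    | zero => simp [hXS]
    | succ n => simp [hXS]
  -- Φ = Ds + δS
  have hsplit : ΦS = Ds + δS := by
    refine PowerSeries.ext fun m => ?_
    rw [map_add, hDs, PowerSeries.coeff_C]
    cases m with
    | zero => simp [hΦS, hδS]
    | succ n => simp [hΦS, hδS]
  -- Φ² = 0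
  have hΦΦS : ΦS * ΦS = 0 := by
    refine PowerSeries.ext fun m => ?_
    rw [PowerSeries.coeff_mul, Finset.Nat.sum_antidiagonal_eq_sum_range_succ_mk]
    simp only [hΦS, PowerSeries.coeff_mk, map_zero]
    have := hΦΦ m
    simpa [Module.End.mul_eq_comp] using this
  -- gauge
  have hgaugeS : ES * Ds = ΦS * ES := by
    refine PowerSeries.ext fun m => ?_
    rw [hDs, PowerSeries.coeff_mul_C, PowerSeries.coeff_mul,
      Finset.Nat.sum_antidiagonal_eq_sum_range_succ_mk]
    simp only [hES, hΦS, PowerSeries.coeff_mk]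
    simpa [Module.End.mul_eq_comp] using hgauge m
  -- E is invertible
  have hE1 : PowerSeries.constantCoeff ES = 1 := by
    simp [hES, PowerSeries.constantCoeff_mk, hE0]
  set g : PowerSeries (Module.End 𝕜 A) := PowerSeries.invOfUnit ES 1 with hg
  have hgE : g * ES = 1 := PowerSeries.invOfUnit_mul ES 1 (by simpa using hE1)
  have hEg : ES * g = 1 := PowerSeries.mul_invOfUnit ES 1 (by simpa using hE1)
  have hg0 : PowerSeries.constantCoeff g = 1 := by
    rw [hg, PowerSeries.constantCoeff_invOfUnit]; simp
  -- lifted End relations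
  have hPsplit : Ps = 1 + Ds * Hs + Hs * Ds := by
    rw [hPs, hDs, hHs, ← map_mul, ← map_mul, ← map_one (PowerSeries.C (R := Module.End 𝕜 A)), ← map_add, ← map_add, ← hπ]
  have hDP : Ds * Ps = 0 := by rw [hDs, hPs, ← map_mul, hdπ, map_zero]
  have hPD : Ps * Ds = 0 := by rw [hDs, hPs, ← map_mul, hπd, map_zero]
  have hPP : Ps * Ps = Ps := by rw [hPs, ← map_mul, hππ]
  have hDD : Ds * Ds = 0 := by
    have hdd : Δ 0 * Δ 0 = 0 := by
      have := hΦΦ 0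
      simpa [Module.End.mul_eq_comp] using this
    rw [hDs, ← map_mul, hdd, map_zero]
  -- step 1
  have hDX : Ds * XS * Ps = Ps * (δS * XS * Ps) - δS * XS * Ps - Hs * (Ds * (δS * XS * Ps)) := by
    calc Ds * XS * Ps = Ds * (1 + Hs * (δS * XS)) * Ps := by rw [← hXrec]
    _ = Ds * Ps + Ds * Hs * (δS * XS * Ps) := by noncomm_ring
    _ = (Ps - 1 - Hs * Ds) * (δS * XS * Ps) := by
        rw [hDP, zero_add]
        have : Ds * Hs = Ps - 1 - Hs * Ds := by rw [hPsplit]; noncomm_ring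
        rw [this]
    _ = Ps * (δS * XS * Ps) - δS * XS * Ps - Hs * (Ds * (δS * XS * Ps)) := by noncomm_ring
  -- step 2
  have hDδ : Ds * δS = -(δS * Ds) - δS * δS := by
    have : (Ds + δS) * (Ds + δS) = 0 := by rw [← hsplit]; exact hΦΦS
    have h2 : Ds * Ds + Ds * δS + δS * Ds + δS * δS = 0 := by rw [← this]; noncomm_ring
    rw [hDD, zero_add] at h2
    linear_combination (norm := noncomm_ring) h2
  -- step 3
  have hDδX : Ds * (δS * XS * Ps)
      = -(δS * (Ps * (δS * XS * Ps))) + δS * (Hs * (Ds * (δS * XS * Ps))) := by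
    calc Ds * (δS * XS * Ps) = (Ds * δS) * (XS * Ps) := by noncomm_ring
    _ = (-(δS * Ds) - δS * δS) * (XS * Ps) := by rw [hDδ]
    _ = -(δS * (Ds * XS * Ps)) - δS * (δS * XS * Ps) := by noncomm_ring
    _ = -(δS * (Ps * (δS * XS * Ps) - δS * XS * Ps - Hs * (Ds * (δS * XS * Ps)))) - δS * (δS * XS * Ps) := by rw [hDX]
    _ = -(δS * (Ps * (δS * XS * Ps))) + δS * (Hs * (Ds * (δS * XS * Ps))) := by noncomm_ring
  -- step 4/5 : Y = 0
  obtain ⟨T, hT⟩ : ∃ T, T = Ds * (δS * XS * Ps) := ⟨_, rfl⟩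
  have hT2 : T = -(δS * (Ps * (δS * XS * Ps))) + δS * (Hs * T) := by
    rw [hT]; exact hDδX
  have hZZ : δS * XS * Ps * (δS * XS * Ps)
      = δS * (Ps * (δS * XS * Ps)) + δS * Hs * (δS * XS * Ps * (δS * XS * Ps)) := by
    nth_rewrite 1 [hXrec]
    noncomm_ring
  have hYc : T + δS * XS * Ps * (δS * XS * Ps)
      = (δS * Hs) * (T + δS * XS * Ps * (δS * XS * Ps)) := by
    nth_rewrite 1 [hT2]
    nth_rewrite 1 [hZZ]
    noncomm_ring
  have hY0 : T + δS * XS * Ps * (δS * XS * Ps) = 0 := by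
    have hδH0 : PowerSeries.constantCoeff (δS * Hs) = 0 := by
      rw [map_mul]
      have : PowerSeries.constantCoeff δS = 0 := by
        simp [hδS, PowerSeries.constantCoeff_mk]
      rw [this, zero_mul]
    have hu : PowerSeries.constantCoeff (1 - δS * Hs) = 1 := by
      rw [map_sub, map_one, hδH0, sub_zero]
    have hinv : PowerSeries.invOfUnit (1 - δS * Hs) 1 * (1 - δS * Hs) = 1 :=
      PowerSeries.invOfUnit_mul _ 1 (by simpa using hu)
    have hzero : (1 - δS * Hs) * (T + δS * XS * Ps * (δS * XS * Ps)) = 0 := by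
      rw [sub_mul, one_mul, ← hYc, sub_self]
    calc T + δS * XS * Ps * (δS * XS * Ps) = 1 * (T + δS * XS * Ps * (δS * XS * Ps)) := (one_mul _).symm
    _ = (PowerSeries.invOfUnit (1 - δS * Hs) 1 * (1 - δS * Hs)) * (T + δS * XS * Ps * (δS * XS * Ps)) := by rw [hinv]
    _ = PowerSeries.invOfUnit (1 - δS * Hs) 1 * ((1 - δS * Hs) * (T + δS * XS * Ps * (δS * XS * Ps))) := by rw [mul_assoc]
    _ = 0 := by rw [hzero, mul_zero]
  -- step 6 : transferred identity
  have key1 : ΦS * (XS * Ps) = (XS * Ps) * (Ps * (δS * XS) * Ps) := by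
    have e1 : ΦS * (XS * Ps) = Ps * (δS * XS * Ps) - Hs * T := by
      rw [hsplit, hT]
      calc (Ds + δS) * (XS * Ps) = Ds * XS * Ps + δS * XS * Ps := by noncomm_ring
      _ = Ps * (δS * XS * Ps) - δS * XS * Ps - Hs * (Ds * (δS * XS * Ps)) + δS * XS * Ps := by rw [hDX]
      _ = _ := by noncomm_ring
    have e2 : (XS * Ps) * (Ps * (δS * XS) * Ps)
        = Ps * (δS * XS * Ps) + Hs * (δS * XS * Ps * (δS * XS * Ps)) := by
      calc (XS * Ps) * (Ps * (δS * XS) * Ps) = (1 + Hs * (δS * XS)) * Ps * (Ps * (δS * XS) * Ps) := by rw [← hXrec]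
      _ = Ps * Ps * (δS * XS) * Ps + Hs * (δS * XS * (Ps * Ps) * ((δS * XS) * Ps)) := by noncomm_ring
      _ = _ := by rw [hPP]; noncomm_ring
    rw [e1, e2]
    have h0 : Hs * T + Hs * (δS * XS * Ps * (δS * XS * Ps)) = 0 := by
      calc Hs * T + Hs * (δS * XS * Ps * (δS * XS * Ps))
          = Hs * (T + δS * XS * Ps * (δS * XS * Ps)) := by noncomm_ring
      _ = 0 := by rw [hY0, mul_zero]
    linear_combination (norm := noncomm_ring) -h0
  -- step 7 : g Φ = Ds g
  have hgΦ : g * ΦS = Ds * g := by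
    calc g * ΦS = g * ΦS * (ES * g) := by rw [hEg, mul_one]
    _ = g * (ΦS * ES) * g := by noncomm_ring
    _ = g * (ES * Ds) * g := by rw [← hgaugeS]
    _ = (g * ES) * (Ds * g) := by noncomm_ring
    _ = Ds * g := by rw [hgE, one_mul]
  -- step 8 : main identity
  set J : PowerSeries (Module.End 𝕜 A) := g * (XS * Ps) with hJ
  set M : PowerSeries (Module.End 𝕜 A) := Ps * (δS * XS) * Ps with hM
  have keyS : Ds * J = J * M := by
    calc Ds * J = (Ds * g) * (XS * Ps) := by rw [hJ]; noncomm_ring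
    _ = (g * ΦS) * (XS * Ps) := by rw [← hgΦ]
    _ = g * (ΦS * (XS * Ps)) := by noncomm_ring
    _ = g * ((XS * Ps) * M) := by rw [key1, hM]
    _ = J * M := by rw [hJ, hM]; noncomm_ring
  -- extraction
  intro n hn hIH
  refine ⟨PowerSeries.coeff n J, ?_⟩
  have hMc : ∀ m, PowerSeries.coeff m M = if m = 0 then 0 else π * w m * π := by
    intro m
    rw [hM, PowerSeries.coeff_mul_C, hPs, PowerSeries.coeff_C_mul, u_coeff]
    by_cases hm : m = 0
    · simp [hm]
    · rw [if_neg hm, if_neg hm]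
  have lhs : PowerSeries.coeff n (Ds * J) = Δ 0 * PowerSeries.coeff n J := by
    rw [hDs, PowerSeries.coeff_C_mul]
  have rhs : PowerSeries.coeff n (J * M) = π * w n * π := by
    rw [PowerSeries.coeff_mul, Finset.Nat.sum_antidiagonal_eq_sum_range_succ_mk]
    have hterm : ∀ k ∈ Finset.range (n+1),
        PowerSeries.coeff k J * PowerSeries.coeff (n - k) M
          = if k = 0 then π * w n * π else 0 := by
      intro k hk
      have hk' : k < n + 1 := Finset.mem_range.mp hk
      by_cases h0 : k = 0
      · subst h0
        rw [if_pos rfl]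
        have : PowerSeries.coeff 0 J = π := by
          rw [hJ, PowerSeries.coeff_zero_eq_constantCoeff_apply]
          rw [map_mul, map_mul, hg0, one_mul]
          have hX0 : PowerSeries.constantCoeff XS = 1 := by simp [hXS, PowerSeries.constantCoeff_mk]
          have hP0 : PowerSeries.constantCoeff Ps = π := by rw [hPs]; simp
          rw [hX0, hP0, one_mul]
        rw [this, Nat.sub_zero, hMc, if_neg (by omega)]
        calc π * (π * w n * π) = (π * π) * w n * π := by noncomm_ring
        _ = π * w n * π := by rw [hππ]
      · rw [if_neg h0]
        rw [hMc]
        by_cases hnk : n - k = 0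
        · rw [if_pos hnk, mul_zero]
        · rw [if_neg hnk, hIH (n - k) (by omega) (by omega), mul_zero]
    rw [Finset.sum_congr rfl hterm, Finset.sum_ite_eq' (Finset.range (n+1)) 0, if_pos]
    simp
  rw [← lhs, keyS, rhs]
end core

section main2
variable {A : Type} [AddCommGroup A] [Module 𝕜 A]

lemma transferredDelta_eq_wSum {H : Type} [AddCommGroup H] [Module 𝕜 H]
    (Δ : ℕ → Module.End 𝕜 A) (h : Module.End 𝕜 A) (p : A →ₗ[𝕜] H) (i : H →ₗ[𝕜] A) (k : ℕ) :
    transferredDelta 𝕜 Δ h p i 0 (k+1) = p ∘ₗ wSum 𝕜 Δ h (k+1) ∘ₗ i := by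
  show (∑ c : Composition (k+1), p ∘ₗ mcWord 𝕜 Δ h c.blocks ∘ₗ i) = _
  ext y
  simp [wSum, LinearMap.sum_apply, map_sum]

end main2

set_option maxHeartbeats 1600000 in

/-- if a multicomplex satisfies the gauge Hodge condition, then EVERY
deformation retract of `(A, d)` onto the homology `(H(A, d), 0)` is a Hodge-to-de Rham
degeneration data: all transferred operators `Δ'_n`, `n ≥ 1`, vanish. -/
theorem gaugeHodge_every_deformationRetract_is_HodgeData
    {A : Type} [AddCommGroup A] [Module 𝕜 A]
    (𝒜 : ℤ → Submodule 𝕜 A) (h𝒜 : DirectSum.IsInternal 𝒜)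
    (Δ : ℕ → Module.End 𝕜 A) (hΔ : IsMulticomplex 𝕜 𝒜 Δ)
    -- the gauge Hodge condition
    (R : ℕ → Module.End 𝕜 A)
    (hRdeg : ∀ n : ℕ, 1 ≤ n → HasDeg 𝕜 𝒜 𝒜 (R n) (2 * (n : ℤ)))
    (hgauge : ∀ n : ℕ, expCoeff 𝕜 R n ∘ₗ Δ 0 =
      ∑ l ∈ Finset.range (n + 1), Δ l ∘ₗ expCoeff 𝕜 R (n - l)) :
    -- every deformation retract onto the homology is a Hodge-to-de Rham degeneration data
    ∀ (H : Type) [AddCommGroup H] [Module 𝕜 H],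
    ∀ (ℋ : ℤ → Submodule 𝕜 H) (p : A →ₗ[𝕜] H) (i : H →ₗ[𝕜] A) (h : Module.End 𝕜 A),
      IsHomotopyRetract 𝕜 𝒜 ℋ (Δ 0) (0 : Module.End 𝕜 H) p i h →
      p ∘ₗ i = LinearMap.id →
      ∀ n : ℕ, 1 ≤ n → transferredDelta 𝕜 Δ h p i 0 n = 0 := by
  intro H _ _ ℋ p i h hret hpi
  obtain ⟨_, _, _, hpd, hid, hqiso, hhomot⟩ := hret
  have hdi : Δ 0 ∘ₗ i = 0 := by rw [← hid, LinearMap.comp_zero]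
  have hpd0 : p ∘ₗ Δ 0 = 0 := by rw [hpd, LinearMap.zero_comp]
  have hπ : (i ∘ₗ p : Module.End 𝕜 A) = 1 + Δ 0 * h + h * Δ 0 := by
    have h1 : i ∘ₗ p = LinearMap.id + (Δ 0 ∘ₗ h + h ∘ₗ Δ 0) := by
      have h2 := hhomot
      rw [sub_eq_iff_eq_add] at h2
      rw [h2]; abel
    rw [h1]
    simp only [Module.End.mul_eq_comp, Module.End.one_eq_id, add_assoc]
  have hdπ : Δ 0 * (i ∘ₗ p : Module.End 𝕜 A) = 0 := by
    show Δ 0 ∘ₗ (i ∘ₗ p) = 0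
    rw [← LinearMap.comp_assoc, hdi, LinearMap.zero_comp]
  have hπd : (i ∘ₗ p : Module.End 𝕜 A) * Δ 0 = 0 := by
    show (i ∘ₗ p) ∘ₗ Δ 0 = 0
    rw [LinearMap.comp_assoc, hpd0, LinearMap.comp_zero]
  have hππ : (i ∘ₗ p : Module.End 𝕜 A) * (i ∘ₗ p) = i ∘ₗ p := by
    show (i ∘ₗ p) ∘ₗ (i ∘ₗ p) = i ∘ₗ p
    rw [LinearMap.comp_assoc, ← LinearMap.comp_assoc p i p, hpi, LinearMap.id_comp]
  intro n
  induction n using Nat.strong_induction_on with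
  | _ n IH =>
    intro hn
    have hsmall : ∀ m, 1 ≤ m → m < n →
        (i ∘ₗ p : Module.End 𝕜 A) * wSum 𝕜 Δ h m * (i ∘ₗ p) = 0 := by
      intro m h1 h2
      obtain ⟨k, rfl⟩ : ∃ k, m = k + 1 := ⟨m - 1, by omega⟩
      have hm0 : transferredDelta 𝕜 Δ h p i 0 (k+1) = 0 := IH (k+1) h2 h1
      have heq := transferredDelta_eq_wSum 𝕜 Δ h p i k
      rw [hm0] at heq
      show (i ∘ₗ p) ∘ₗ wSum 𝕜 Δ h (k+1) ∘ₗ (i ∘ₗ p) = 0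
      calc (i ∘ₗ p) ∘ₗ wSum 𝕜 Δ h (k+1) ∘ₗ (i ∘ₗ p)
          = i ∘ₗ (p ∘ₗ wSum 𝕜 Δ h (k+1) ∘ₗ i) ∘ₗ p := by
            simp only [LinearMap.comp_assoc]
      _ = 0 := by rw [← heq, LinearMap.zero_comp, LinearMap.comp_zero]
    obtain ⟨J, hJ⟩ := key_coeff 𝕜 Δ h (i ∘ₗ p) (expCoeff 𝕜 R) (wSum 𝕜 Δ h)
      (wSum_succ 𝕜 Δ h) hΔ.2 rfl hgauge hπ hdπ hπd hππ n hn hsmall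
    obtain ⟨k, rfl⟩ : ∃ k, n = k + 1 := ⟨n - 1, by omega⟩
    ext y
    have hpiy : p (i y) = y := by
      have h3 := congrArg (fun f => f y) hpi
      simpa using h3
    have hval : i (transferredDelta 𝕜 Δ h p i 0 (k+1) y) = Δ 0 (J (i y)) := by
      have happ := congrArg (fun f : Module.End 𝕜 A => f (i y)) hJ
      simp only [Module.End.mul_apply, LinearMap.comp_apply, hpiy] at happ
      rw [transferredDelta_eq_wSum 𝕜 Δ h p i k]
      simp only [LinearMap.comp_apply]
      rw [happ]
    have hmem : transferredDelta 𝕜 Δ h p i 0 (k+1) y ∈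
        LinearMap.range (0 : Module.End 𝕜 H) := by
      refine hqiso.1 _ (by simp [LinearMap.mem_ker]) ?_
      exact ⟨J (i y), hval.symm⟩
    obtain ⟨z, hz⟩ := hmem
    simp only [LinearMap.zero_apply] at hz
    simp [← hz]
end
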